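/- arXiv:2109.08629 — 9 statements merged into one kernel-verified Lean document; each statement's English description precedes it below -/
import Mathlib

section
/- Let r be a natural number and Q, Q' symmetric r×r matrices over ℤ. Then x ⬝ᵥ (Q.mulVec x) ≡ x ⬝ᵥ (Q'.mulVec x) (mod 4) holds for every bit vector x : Fin r → ℤ (all entries 0 or 1) if and only if there exists an integer matrix Γ whose diagonal entries are all even such that Q' − Q = 2 • Γ. -/
/-!
Write `D = Q' - Q`, so the hypothesis says `4 ∣ xᵀ D x` for every bit vector `x`. Testing it on
`eᵢ` and on `eᵢ + eⱼ` (whose value is `Dᵢᵢ + Dⱼⱼ + 2 Dᵢⱼ`) shows that the diagonal of `D` is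
divisible by 4 and every entry by 2, i.e. `D = 2 Γ` with `Γ` of even diagonal. Conversely, for
such a (necessarily symmetric) `Γ`, reduction mod 2 makes `Γ` alternating, so `xᵀ Γ x` is even
for every integer vector `x`, and `xᵀ D x = 2 xᵀ Γ x` is divisible by 4.
-/

open Matrix

theorem Finset.sum_sum_eq_zero_of_antisymm {ι M : Type*} [Fintype ι] [AddCommGroup M]
    (f : ι → ι → M) (hf : ∀ i j, f j i = -f i j) (hd : ∀ i, f i i = 0) :
    ∑ i, ∑ j, f i j = 0 := by
  rw [← Finset.sum_product']
  refine Finset.sum_involution (fun p _ => p.swap) (fun p _ => ?_) ?_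
    (fun p _ => Finset.mem_univ _) (fun p _ => rfl)
  · exact add_eq_zero_iff_eq_neg'.2 (hf p.1 p.2)
  · rintro ⟨i, j⟩ _ hne heq
    obtain rfl : j = i := congrArg Prod.fst heq
    exact hne (hd j)

namespace Matrix

variable {n R : Type*}

theorem IsSymm.of_smul {S α : Type*} [Semiring S] [AddCommMonoid α] [Module S α]
    [Module.IsTorsionFree S α] {k : S} (hk : IsRegular k) {A : Matrix n n α}
    (h : (k • A).IsSymm) : A.IsSymm := by
  ext i j
  exact hk.smul_right_injective α (congr_fun₂ h i j)

variable [Fintype n]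

theorem dotProduct_mulVec_self_eq_zero [CommRing R] (A : Matrix n n R)
    (hA : ∀ i j, A j i = -A i j) (hd : ∀ i, A i i = 0) (x : n → R) :
    x ⬝ᵥ A *ᵥ x = 0 := by
  simp only [dotProduct, mulVec, Finset.mul_sum]
  exact Finset.sum_sum_eq_zero_of_antisymm _ (fun i j => by rw [hA]; ring)
    (fun i => by rw [hd]; ring)

theorem two_dvd_dotProduct_mulVec_self {Γ : Matrix n n ℤ} (hΓ : Γ.IsSymm)
    (hd : ∀ k, 2 ∣ Γ k k) (x : n → ℤ) : 2 ∣ x ⬝ᵥ Γ *ᵥ x := by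
  let φ := Int.castRingHom (ZMod 2)
  suffices φ (x ⬝ᵥ Γ *ᵥ x) = 0 from (ZMod.intCast_zmod_eq_zero_iff_dvd _ 2).mp this
  rw [RingHom.map_dotProduct, show φ ∘ (Γ *ᵥ x) = Γ.map φ *ᵥ (φ ∘ x) from
    funext (RingHom.map_mulVec φ Γ x)]
  -- over `ZMod 2` a symmetric matrix is alternating
  refine dotProduct_mulVec_self_eq_zero _ (fun i j => ?_) (fun i => ?_) _
  · rw [ZMod.neg_eq_self_mod_two, map_apply, map_apply, hΓ.apply]
  · exact (ZMod.intCast_zmod_eq_zero_iff_dvd _ 2).mpr (hd i)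

variable [DecidableEq n]

theorem single_one_dotProduct_mulVec_single_one [NonAssocSemiring R] (M : Matrix n n R)
    (i j : n) : Pi.single i 1 ⬝ᵥ M *ᵥ Pi.single j 1 = M i j := by
  simp

theorem four_dvd_diag_of_forall_bits {D : Matrix n n ℤ}
    (hD : ∀ x : n → ℤ, (∀ k, x k = 0 ∨ x k = 1) → 4 ∣ x ⬝ᵥ D *ᵥ x) (i : n) : 4 ∣ D i i := by
  have hbits : ∀ k, (Pi.single i 1 : n → ℤ) k = 0 ∨ (Pi.single i 1 : n → ℤ) k = 1 := by
    intro k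
    rcases eq_or_ne k i with rfl | hk <;> simp [*]
  simpa only [single_one_dotProduct_mulVec_single_one] using hD _ hbits

theorem two_dvd_of_forall_bits {D : Matrix n n ℤ} (hsymm : D.IsSymm)
    (hD : ∀ x : n → ℤ, (∀ k, x k = 0 ∨ x k = 1) → 4 ∣ x ⬝ᵥ D *ᵥ x) (i j : n) : 2 ∣ D i j := by
  rcases eq_or_ne i j with rfl | hij
  · exact dvd_trans (by norm_num) (four_dvd_diag_of_forall_bits hD i)
  have hbits : ∀ k, (Pi.single i 1 + Pi.single j 1 : n → ℤ) k = 0 ∨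
      (Pi.single i 1 + Pi.single j 1 : n → ℤ) k = 1 := by
    intro k
    rcases eq_or_ne k i with rfl | hki
    · simp [hij]
    rcases eq_or_ne k j with rfl | hkj <;> simp [*]
  have hval : (Pi.single i 1 + Pi.single j 1) ⬝ᵥ D *ᵥ (Pi.single i 1 + Pi.single j 1) =
      D i i + D j j + 2 * D i j := by
    simp only [mulVec_add, dotProduct_add, add_dotProduct,
      single_one_dotProduct_mulVec_single_one, hsymm.apply]
    ring
  have h4 := hD _ hbits
  rw [hval] at h4
  have := four_dvd_diag_of_forall_bits hD i
  have := four_dvd_diag_of_forall_bits hD j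
  omega

theorem exists_eq_two_smul_of_forall_bits {D : Matrix n n ℤ} (hsymm : D.IsSymm)
    (hD : ∀ x : n → ℤ, (∀ k, x k = 0 ∨ x k = 1) → 4 ∣ x ⬝ᵥ D *ᵥ x) :
    ∃ Γ : Matrix n n ℤ, (∀ k, 2 ∣ Γ k k) ∧ D = (2 : ℤ) • Γ := by
  refine ⟨fun i j => D i j / 2, fun k => ?_, ?_⟩
  · exact Int.dvd_div_of_mul_dvd (four_dvd_diag_of_forall_bits hD k)
  · ext i j
    exact (Int.mul_ediv_cancel' (two_dvd_of_forall_bits hsymm hD i j)).symm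

end Matrix

/-- Two symmetric integer Gram matrices give quadratic forms agreeing mod 4
on all bit vectors iff they differ by twice a matrix with even diagonal. -/
theorem quadratic_form_congr_mod_four_iff
    (r : ℕ) (Q Q' : Matrix (Fin r) (Fin r) ℤ) (hQ : Q.IsSymm) (hQ' : Q'.IsSymm) :
    (∀ x : Fin r → ℤ, (∀ k, x k = 0 ∨ x k = 1) →
        x ⬝ᵥ Q.mulVec x ≡ x ⬝ᵥ Q'.mulVec x [ZMOD 4])
      ↔ ∃ Γ : Matrix (Fin r) (Fin r) ℤ, (∀ k, 2 ∣ Γ k k) ∧ Q' - Q = (2 : ℤ) • Γ := by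
  have hdiff (x : Fin r → ℤ) :
      x ⬝ᵥ Q *ᵥ x ≡ x ⬝ᵥ Q' *ᵥ x [ZMOD 4] ↔ 4 ∣ x ⬝ᵥ (Q' - Q) *ᵥ x := by
    rw [Int.modEq_iff_dvd, sub_mulVec, dotProduct_sub]
  simp_rw [hdiff]
  constructor
  · exact exists_eq_two_smul_of_forall_bits (hQ'.sub hQ)
  · rintro ⟨Γ, hdiag, hΓ⟩ x -
    have hsymm : Γ.IsSymm := IsSymm.of_smul (.of_ne_zero two_ne_zero) (hΓ ▸ hQ'.sub hQ)
    obtain ⟨c, hc⟩ := two_dvd_dotProduct_mulVec_self hsymm hdiag x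
    rw [hΓ, smul_mulVec, dotProduct_smul, smul_eq_mul, hc]
    exact ⟨c, by ring⟩
end

section
/- Let n, r be natural numbers, A an n×r integer matrix, Q a symmetric r×r integer matrix, b : Fin n → ℤ with all entries in {0,1}, and E an r×r integer matrix which is invertible over ℤ (unimodular, i.e. E has an integer inverse). Let A' be an n×r integer matrix with A' ≡ A*E entrywise modulo 2, and Q' a symmetric r×r integer matrix with Q' ≡ Eᵀ*Q*E entrywise modulo 4. Then, as functions (Fin n → ZMod 2) → ℂ, ∑ over bit vectors x : Fin r → ℤ of i^{x ⬝ᵥ (Q.mulVec x)} • e_{red₂(A.mulVec x + b)} equals ∑ over bit vectors x : Fin r → ℤ of i^{x ⬝ᵥ (Q'.mulVec x)} • e_{red₂(A'.mulVec x + b)}. -/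
open Matrix

/-- The integer lift of a `ZMod 2` vector: a bit vector in `Fin r → ℤ`. -/
def intify {r : ℕ} (v : Fin r → ZMod 2) : Fin r → ℤ := fun k => ((v k).val : ℤ)

/-- Entrywise reduction of an integer vector modulo 2. -/
def red₂ {n : ℕ} (x : Fin n → ℤ) : Fin n → ZMod 2 := fun j => (x j : ZMod 2)

/-- The indicator function (standard basis vector) of `v : Fin n → ZMod 2`. -/
def ind {n : ℕ} (v : Fin n → ZMod 2) : (Fin n → ZMod 2) → ℂ := fun y => if y = v then 1 else 0

lemma red₂_intify {r : ℕ} (v : Fin r → ZMod 2) : red₂ (intify v) = v := by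
  funext k; simp [red₂, intify, ZMod.natCast_val, ZMod.cast_id]

lemma red₂_mulVec {n r : ℕ} (A : Matrix (Fin n) (Fin r) ℤ) (x : Fin r → ℤ) :
    red₂ (A *ᵥ x) = (A.map (Int.cast : ℤ → ZMod 2)) *ᵥ (red₂ x) := by
  funext j; simp [red₂, Matrix.mulVec, dotProduct]

lemma red₂_add {n : ℕ} (x y : Fin n → ℤ) : red₂ (x + y) = red₂ x + red₂ y := by
  funext j; simp [red₂]

lemma I_zpow_congr (a b : ℤ) (h : a ≡ b [ZMOD 4]) : Complex.I ^ a = Complex.I ^ b := by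
  obtain ⟨k, hk⟩ := Int.modEq_iff_dvd.mp h
  have hb : b = a + 4 * k := by linarith
  rw [hb, zpow_add₀ Complex.I_ne_zero, _root_.zpow_mul]
  have h4 : Complex.I ^ (4 : ℤ) = 1 := by
    rw [show (4 : ℤ) = ((4 : ℕ) : ℤ) by norm_num, zpow_natCast, Complex.I_pow_four]
  rw [h4, _root_.one_zpow, mul_one]

lemma dot_symm {r : ℕ} (Q : Matrix (Fin r) (Fin r) ℤ) (hQ : Q.IsSymm) (u w : Fin r → ℤ) :
    u ⬝ᵥ Q *ᵥ w = w ⬝ᵥ Q *ᵥ u := by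
  conv_lhs => rw [dotProduct_mulVec, ← hQ, vecMul_transpose, dotProduct_comm]

lemma quad_mod4 {r : ℕ} (Q : Matrix (Fin r) (Fin r) ℤ) (hQ : Q.IsSymm) (x y : Fin r → ℤ)
    (h : ∀ j, x j ≡ y j [ZMOD 2]) : x ⬝ᵥ Q *ᵥ x ≡ y ⬝ᵥ Q *ᵥ y [ZMOD 4] := by
  have hd : ∀ j, ∃ d : ℤ, x j = y j + 2 * d := by
    intro j
    obtain ⟨k, hk⟩ := Int.modEq_iff_dvd.mp (h j).symm
    exact ⟨k, by linarith⟩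
  choose d hdd using hd
  have hx : x = y + (2 : ℤ) • d := by funext j; simp [hdd j]
  have key : x ⬝ᵥ Q *ᵥ x = y ⬝ᵥ Q *ᵥ y + 4 * (d ⬝ᵥ Q *ᵥ y + d ⬝ᵥ Q *ᵥ d) := by
    rw [hx]
    simp only [mulVec_add, dotProduct_add, add_dotProduct, mulVec_smul, dotProduct_smul,
      smul_dotProduct, smul_eq_mul]
    rw [dot_symm Q hQ y d]
    ring
  rw [Int.modEq_iff_dvd, key]
  exact ⟨-(d ⬝ᵥ Q *ᵥ y + d ⬝ᵥ Q *ᵥ d), by ring⟩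

lemma quad_entry_mod4 {r : ℕ} (M N : Matrix (Fin r) (Fin r) ℤ) (x : Fin r → ℤ)
    (h : ∀ k l, M k l ≡ N k l [ZMOD 4]) : x ⬝ᵥ M *ᵥ x ≡ x ⬝ᵥ N *ᵥ x [ZMOD 4] := by
  rw [Int.modEq_iff_dvd]
  have : x ⬝ᵥ N *ᵥ x - x ⬝ᵥ M *ᵥ x = x ⬝ᵥ (N - M) *ᵥ x := by
    rw [sub_mulVec, dotProduct_sub]
  rw [this]
  simp only [dotProduct, Matrix.mulVec, Pi.sub_apply, Matrix.sub_apply]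
  refine Finset.dvd_sum fun k _ => Dvd.dvd.mul_left ?_ _
  refine Finset.dvd_sum fun l _ => ?_
  exact Dvd.dvd.mul_right (Int.modEq_iff_dvd.mp (h k l)) _

/-- A change of variables by a unimodular matrix `E`, transforming the
expansion matrix `A ↦ A E (mod 2)` and the Gram matrix `Q ↦ Eᵀ Q E (mod 4)`, leaves the
quadratic form expansion unchanged. -/
theorem qfe_change_of_variables
    (n r : ℕ) (A A' : Matrix (Fin n) (Fin r) ℤ)
    (Q Q' : Matrix (Fin r) (Fin r) ℤ) (hQ : Q.IsSymm) (hQ' : Q'.IsSymm)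
    (b : Fin n → ℤ) (hb : ∀ j, b j = 0 ∨ b j = 1)
    (E : Matrix (Fin r) (Fin r) ℤ) (hE : IsUnit E)
    (hA' : ∀ j k, A' j k ≡ (A * E) j k [ZMOD 2])
    (hQ'E : ∀ k l, Q' k l ≡ (Eᵀ * Q * E) k l [ZMOD 4]) :
    (∑ v : Fin r → ZMod 2,
        (Complex.I ^ (intify v ⬝ᵥ Q.mulVec (intify v))) • ind (red₂ (A.mulVec (intify v) + b)))
      = ∑ v : Fin r → ZMod 2,
        (Complex.I ^ (intify v ⬝ᵥ Q'.mulVec (intify v))) • ind (red₂ (A'.mulVec (intify v) + b)) := by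
  set E₂ : Matrix (Fin r) (Fin r) (ZMod 2) := E.map (Int.cast : ℤ → ZMod 2) with hE₂def
  have hE₂ : IsUnit E₂ := hE.map (RingHom.mapMatrix (Int.castRingHom (ZMod 2)))
  have hinv : E₂⁻¹ * E₂ = 1 := nonsing_inv_mul E₂ ((isUnit_iff_isUnit_det E₂).mp hE₂)
  set e : (Fin r → ZMod 2) → (Fin r → ZMod 2) := fun v => E₂ *ᵥ v with hedef
  have he : Function.Bijective e := by
    have hli : Function.LeftInverse (fun v => E₂⁻¹ *ᵥ v) e := by
      intro v; simp only [hedef, mulVec_mulVec, hinv, one_mulVec]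
    have hri : Function.RightInverse (fun v => E₂⁻¹ *ᵥ v) e := by
      intro v
      have hinv' : E₂ * E₂⁻¹ = 1 := mul_nonsing_inv E₂ ((isUnit_iff_isUnit_det E₂).mp hE₂)
      simp only [hedef, mulVec_mulVec, hinv', one_mulVec]
    exact ⟨hli.injective, hri.surjective⟩
  refine (Fintype.sum_bijective e he _ _ fun v => ?_).symm
  -- key congruence: intify (e v) ≡ E *ᵥ intify v  (mod 2) entrywise
  have hred : red₂ (intify (e v)) = red₂ (E *ᵥ intify v) := by
    rw [red₂_intify, red₂_mulVec, red₂_intify]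
  have h2 : ∀ j, intify (e v) j ≡ (E *ᵥ intify v) j [ZMOD 2] := by
    intro j
    have := congrFun hred j
    exact (ZMod.intCast_eq_intCast_iff _ _ _).mp this
  -- exponent equality
  have hexp : Complex.I ^ (intify (e v) ⬝ᵥ Q *ᵥ intify (e v))
      = Complex.I ^ (intify v ⬝ᵥ Q' *ᵥ intify v) := by
    apply I_zpow_congr
    have c1 : intify (e v) ⬝ᵥ Q *ᵥ intify (e v)
        ≡ (E *ᵥ intify v) ⬝ᵥ Q *ᵥ (E *ᵥ intify v) [ZMOD 4] := quad_mod4 Q hQ _ _ h2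
    have c2 : (E *ᵥ intify v) ⬝ᵥ Q *ᵥ (E *ᵥ intify v)
        = intify v ⬝ᵥ (Eᵀ * Q * E) *ᵥ intify v := by
      conv_rhs => rw [← mulVec_mulVec, ← mulVec_mulVec, dotProduct_mulVec, vecMul_transpose]
    have c3 : intify v ⬝ᵥ (Eᵀ * Q * E) *ᵥ intify v ≡ intify v ⬝ᵥ Q' *ᵥ intify v [ZMOD 4] :=
      quad_entry_mod4 _ _ _ fun k l => (hQ'E k l).symm
    exact c1.trans (c2 ▸ c3)
  -- indicator equality
  have hind : red₂ (A *ᵥ intify (e v) + b) = red₂ (A' *ᵥ intify v + b) := by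
    rw [red₂_add, red₂_add, red₂_mulVec, red₂_mulVec, red₂_intify, red₂_intify]
    congr 1
    have hA2 : A'.map (Int.cast : ℤ → ZMod 2) = (A * E).map (Int.cast : ℤ → ZMod 2) := by
      ext j k
      simpa [Matrix.map_apply] using (ZMod.intCast_eq_intCast_iff _ _ _).mpr (hA' j k)
    rw [hA2]
    have : (A * E).map (Int.cast : ℤ → ZMod 2)
        = A.map (Int.cast : ℤ → ZMod 2) * E₂ := by
      ext j k
      simpa using RingHom.map_matrix_mul A E j k (Int.castRingHom (ZMod 2))
    rw [this, hedef, mulVec_mulVec]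
  rw [hexp, hind]
end

section
/- Let n, r be natural numbers, A : Matrix (Fin n) (Fin r) (ZMod 2) a matrix whose associated linear map x ↦ A.mulVec x is injective (equivalently, A has rank r over ZMod 2), b : Fin n → ZMod 2, and Q a symmetric r×r integer matrix. Define ψ : (Fin n → ZMod 2) → ℂ by ψ := (1 / Real.sqrt (2^r)) • ∑ over bit vectors x : Fin r → ℤ of i^{x ⬝ᵥ (Q.mulVec x)} • e_{A.mulVec (red₂ x) + b}. Then ∑_{y : Fin n → ZMod 2} ‖ψ y‖² = 1; that is, the quadratic form expansion with full-rank expansion matrix represents a normalised state. -/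
open Matrix

/-- A quadratic form expansion with a full-rank (injective) expansion matrix
over `ZMod 2` represents a normalised state. -/
theorem qfe_normalised
    (n r : ℕ) (A : Matrix (Fin n) (Fin r) (ZMod 2))
    (hA : Function.Injective A.mulVec)
    (b : Fin n → ZMod 2)
    (Q : Matrix (Fin r) (Fin r) ℤ) (hQ : Q.IsSymm) :
    ∑ y : Fin n → ZMod 2,
      ‖((((1 / Real.sqrt (2 ^ r) : ℝ)) : ℂ) •
          ∑ v : Fin r → ZMod 2,
            (Complex.I ^ (intify v ⬝ᵥ Q.mulVec (intify v))) •
              ind (A.mulVec (red₂ (intify v)) + b)) y‖ ^ 2 = 1 := by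
  classical
  have hred : ∀ v : Fin r → ZMod 2, red₂ (intify v) = v := by
    intro v; funext k
    simp [red₂, intify, ZMod.natCast_val, ZMod.intCast_cast, ZMod.cast_id]
  set f : (Fin r → ZMod 2) → (Fin n → ZMod 2) := fun v => A.mulVec v + b with hf
  have hfinj : Function.Injective f := by
    intro a c h
    apply hA
    simpa [hf] using h
  have hS : ∀ y, ((∑ v : Fin r → ZMod 2,
        (Complex.I ^ (intify v ⬝ᵥ Q.mulVec (intify v))) • ind (A.mulVec (red₂ (intify v)) + b)) y)
      = ∑ v : Fin r → ZMod 2, if y = f v then Complex.I ^ (intify v ⬝ᵥ Q.mulVec (intify v)) else 0 := by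
    intro y
    simp only [Finset.sum_apply, Pi.smul_apply, ind, hred, smul_eq_mul, mul_ite, mul_one, mul_zero, hf]
  have hnormS : ∀ y, ‖∑ v : Fin r → ZMod 2, if y = f v then Complex.I ^ (intify v ⬝ᵥ Q.mulVec (intify v)) else 0‖ ^ 2
      = if y ∈ Finset.image f Finset.univ then 1 else 0 := by
    intro y
    by_cases hy : y ∈ Finset.image f Finset.univ
    · obtain ⟨v, _, hv⟩ := Finset.mem_image.mp hy
      rw [Finset.sum_eq_single v]
      · simp [hv.symm, norm_zpow]
      · intro w _ hw
        have : y ≠ f w := by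
          rw [← hv]; exact fun h => hw (hfinj h.symm)
        simp [this]
      · simp
    · rw [Finset.sum_eq_zero, if_neg hy]
      · simp
      · intro w _
        have : y ≠ f w := fun h => hy (Finset.mem_image.mpr ⟨w, Finset.mem_univ _, h.symm⟩)
        simp [this]
  have hcount : (Finset.image f Finset.univ).card = 2 ^ r := by
    rw [Finset.card_image_of_injective _ hfinj]
    simp [Finset.card_univ]
  calc ∑ y : Fin n → ZMod 2,
      ‖((((1 / Real.sqrt (2 ^ r) : ℝ)) : ℂ) •
          ∑ v : Fin r → ZMod 2,
            (Complex.I ^ (intify v ⬝ᵥ Q.mulVec (intify v))) •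
              ind (A.mulVec (red₂ (intify v)) + b)) y‖ ^ 2
      = ∑ y : Fin n → ZMod 2, (1 / Real.sqrt (2 ^ r)) ^ 2 * (if y ∈ Finset.image f Finset.univ then 1 else 0) := by
        apply Finset.sum_congr rfl
        intro y _
        rw [Pi.smul_apply, hS y, norm_smul, mul_pow, ← hnormS y]
        congr 1
        rw [Complex.norm_real, Real.norm_of_nonneg (by positivity)]
    _ = (1 / Real.sqrt (2 ^ r)) ^ 2 * (Finset.image f Finset.univ).card := by
        rw [← Finset.mul_sum]
        congr 1
        simp [Finset.sum_ite_mem]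
    _ = 1 := by
        rw [hcount, div_pow, one_pow, Real.sq_sqrt (by positivity)]
        simp
end

section
/- Let n, r be natural numbers, A : Matrix (Fin n) (Fin r) (ZMod 2) a matrix in principal row form with principal index map p : Fin r → Fin n, j : Fin n, and v : Fin r → ZMod 2 a vector with A.mulVec v equal to the standard basis vector e_j (value 1 at j, value 0 elsewhere). Then there exists k : Fin r such that v is the standard basis vector e_k (so v has exactly one non-zero entry), the k-th column of A equals e_j (i.e. A.mulVec e_k = e_j), and p k = j. -/
open Matrix

/-- If `A` over `ZMod 2` is in principal row form with index map `p`, and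
`A v = e_j` for some vector `v`, then `v` is a standard basis vector `e_k`, column `k` of `A`
equals `e_j`, and `p k = j`. -/
theorem principal_row_form_preimage_single
    (n r : ℕ) (A : Matrix (Fin n) (Fin r) (ZMod 2))
    (p : Fin r → Fin n)
    (hp : ∀ k c, A (p k) c = if c = k then 1 else 0)
    (j : Fin n) (v : Fin r → ZMod 2)
    (hv : A.mulVec v = fun l => if l = j then 1 else 0) :
    ∃ k : Fin r,
      v = (fun c => if c = k then 1 else 0) ∧
      A.mulVec (fun c => if c = k then 1 else 0) = (fun l => if l = j then 1 else 0) ∧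
      p k = j := by
  have hvk : ∀ k, v k = if p k = j then 1 else 0 := by
    intro k
    have h1 : A.mulVec v (p k) = v k := by
      simp [Matrix.mulVec, dotProduct, hp]
    have h2 := congrFun hv (p k)
    rw [h1] at h2
    exact h2
  by_cases h : ∃ k, p k = j
  · obtain ⟨k, hk⟩ := h
    have hpinj : Function.Injective p := by
      intro a b hab
      have h1 : (if a = a then (1:ZMod 2) else 0) = if a = b then 1 else 0 := by
        rw [← hp a a, ← hp b a, hab]
      by_contra hne
      simp [hne] at h1
    have hvE : v = fun c => if c = k then 1 else 0 := by
      funext c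
      rw [hvk c, ← hk]
      simp [hpinj.eq_iff]
    exact ⟨k, hvE, hvE ▸ hv, hk⟩
  · exfalso
    push_neg at h
    have hv0 : v = 0 := by
      funext c
      rw [hvk c]
      simp [h c]
    have h2 := congrFun hv j
    rw [hv0] at h2
    simp [Matrix.mulVec_zero] at h2
end

section
/- Let n, r be natural numbers, A an n×(r+1) integer matrix with all entries in {0,1}, Q a symmetric (r+1)×(r+1) integer matrix, b : Fin n → ℤ with entries in {0,1}, and z ∈ {0,1} ⊆ ℤ. Let Q̃ be the top-left r×r block of Q, q : Fin r → ℤ the first r entries of the last column of Q, and u the bottom-right entry of Q; let A' be the matrix of the first r columns of A and a : Fin n → ℤ the last column of A; let b' : Fin n → ℤ be the {0,1}-vector with b' ≡ b + z•a entrywise mod 2, and Q' := Q̃ + 2z • diag(q). Then ∑ over bit vectors x : Fin (r+1) → ℤ with last entry x_r = z of i^{x ⬝ᵥ (Q.mulVec x)} • e_{red₂(A.mulVec x + b)} equals i^{z·u} • ∑ over bit vectors y : Fin r → ℤ of i^{y ⬝ᵥ (Q'.mulVec y)} • e_{red₂(A'.mulVec y + b')}, as functions (Fin n → ZMod 2)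 → ℂ. -/
open Matrix

theorem Fin.sum_filter_last_eq {α M : Type*} [Fintype α] [DecidableEq α] [AddCommMonoid M]
    {r : ℕ} (c : α) (f : (Fin (r + 1) → α) → M) :
    ∑ v ∈ Finset.univ.filter (fun v : Fin (r + 1) → α => v (Fin.last r) = c), f v
      = ∑ w : Fin r → α, f (Fin.snoc w c) := by
  have hsnoc {v : Fin (r + 1) → α} (hv : v ∈ Finset.univ.filter (· (Fin.last r) = c)) :
      Fin.snoc (Fin.init v) c = v := by
    simp [← (Finset.mem_filter.mp hv).2]
  exact Finset.sum_nbij' Fin.init (Fin.snoc · c) (by simp) (by simp) (fun v hv => hsnoc hv)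
    (by simp) (fun v hv => by rw [hsnoc hv])

theorem snoc_dotProduct_mulVec_snoc {R : Type*} [CommRing R] {r : ℕ}
    (Q : Matrix (Fin (r + 1)) (Fin (r + 1)) R) (hQ : Q.IsSymm) (y : Fin r → R) (z : R) :
    Fin.snoc y z ⬝ᵥ Q *ᵥ Fin.snoc y z
      = y ⬝ᵥ Q.submatrix Fin.castSucc Fin.castSucc *ᵥ y
        + 2 * z * (y ⬝ᵥ fun k : Fin r => Q k.castSucc (Fin.last r))
        + z * z * Q (Fin.last r) (Fin.last r) := by
  have hsym (k : Fin r) : Q (Fin.last r) k.castSucc = Q k.castSucc (Fin.last r) := hQ.apply _ _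
  simp only [dotProduct, mulVec, Fin.sum_univ_castSucc, Fin.snoc_castSucc, Fin.snoc_last,
    submatrix_apply, hsym, mul_add, Finset.sum_add_distrib, Finset.mul_sum]
  have hcross : ∑ k : Fin r, 2 * z * (y k * Q k.castSucc (Fin.last r))
      = ∑ k : Fin r, y k * (Q k.castSucc (Fin.last r) * z)
        + ∑ k : Fin r, z * (Q k.castSucc (Fin.last r) * y k) := by
    rw [← Finset.sum_add_distrib]
    exact Finset.sum_congr rfl fun _ _ => by ring
  rw [hcross]
  ring
theorem dotProduct_diagonal_mulVec_of_mul_self {R : Type*} [CommSemiring R] {r : ℕ}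
    (y q : Fin r → R) (hy : ∀ k, y k * y k = y k) :
    y ⬝ᵥ diagonal q *ᵥ y = y ⬝ᵥ q := by
  simp only [mulVec_diagonal, dotProduct]
  exact Finset.sum_congr rfl fun k _ => by rw [mul_left_comm, hy, mul_comm]

theorem mulVec_snoc {R : Type*} [CommSemiring R] {n r : ℕ} (A : Matrix (Fin n) (Fin (r + 1)) R)
    (y : Fin r → R) (z : R) :
    A *ᵥ Fin.snoc y z = A.submatrix id Fin.castSucc *ᵥ y + z • fun j => A j (Fin.last r) := by
  ext j
  simp [mulVec, dotProduct, Fin.sum_univ_castSucc, mul_comm]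

theorem intify_mul_self {r : ℕ} (v : Fin r → ZMod 2) (k : Fin r) :
    intify v k * intify v k = intify v k := by
  have h : ∀ a : ZMod 2, (a.val : ℤ) * a.val = a.val := by decide
  exact h (v k)

theorem val_intCast_zmod_two {z : ℤ} (hz : z = 0 ∨ z = 1) : ((z : ZMod 2).val : ℤ) = z := by
  rcases hz with rfl | rfl <;> rfl

theorem intify_snoc {r : ℕ} (w : Fin r → ZMod 2) {z : ℤ} (hz : z = 0 ∨ z = 1) :
    intify (Fin.snoc w (z : ZMod 2)) = Fin.snoc (intify w) z := by
  ext k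
  refine Fin.lastCases ?_ (fun k => ?_) k
  · simp [intify, val_intCast_zmod_two hz]
  · simp [intify]

theorem intify_last_eq_iff {r : ℕ} (v : Fin (r + 1) → ZMod 2) {z : ℤ} (hz : z = 0 ∨ z = 1) :
    intify v (Fin.last r) = z ↔ v (Fin.last r) = z := by
  constructor
  · intro h
    simpa [intify] using congrArg (fun t : ℤ => (t : ZMod 2)) h
  · intro h
    rw [intify, h, val_intCast_zmod_two hz]

theorem red₂_eq_red₂_iff {n : ℕ} (x x' : Fin n → ℤ) :
    red₂ x = red₂ x' ↔ ∀ j, x j ≡ x' j [ZMOD 2] := by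
  simp only [funext_iff, red₂, ZMod.intCast_eq_intCast_iff, Nat.cast_ofNat]

theorem red₂_mulVec_snoc_add {n r : ℕ} (A : Matrix (Fin n) (Fin (r + 1)) ℤ) (y : Fin r → ℤ)
    (z : ℤ) (b b' : Fin n → ℤ) (hb' : ∀ j, b' j ≡ b j + z * A j (Fin.last r) [ZMOD 2]) :
    red₂ (A *ᵥ Fin.snoc y z + b) = red₂ (A.submatrix id Fin.castSucc *ᵥ y + b') := by
  rw [red₂_eq_red₂_iff, mulVec_snoc]
  intro j
  simp only [Pi.add_apply, Pi.smul_apply, smul_eq_mul]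
  have := (hb' j).symm.add_left ((A.submatrix id Fin.castSucc *ᵥ y) j)
  rwa [← add_assoc, add_right_comm] at this

theorem qfe_fix_final_bit_general
    (n r : ℕ) (Q : Matrix (Fin (r+1)) (Fin (r+1)) ℤ) (hQ : Q.IsSymm)
    (A : Matrix (Fin n) (Fin (r+1)) ℤ)
    (b : Fin n → ℤ)
    (z : ℤ) (hz : z = 0 ∨ z = 1)
    (b' : Fin n → ℤ)
    (hb' : ∀ j, b' j ≡ b j + z * A j (Fin.last r) [ZMOD 2]) :
    (∑ v ∈ Finset.univ.filter (fun v : Fin (r+1) → ZMod 2 => intify v (Fin.last r) = z),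
        (Complex.I ^ (intify v ⬝ᵥ Q.mulVec (intify v))) • ind (red₂ (A.mulVec (intify v) + b)))
      =
    (Complex.I ^ (z * Q (Fin.last r) (Fin.last r))) •
      ∑ v : Fin r → ZMod 2,
        (Complex.I ^ (intify v ⬝ᵥ
            ((Q.submatrix Fin.castSucc Fin.castSucc
              + (2 * z) • Matrix.diagonal (fun k => Q (Fin.castSucc k) (Fin.last r))).mulVec
              (intify v)))) •
          ind (red₂ ((A.submatrix id Fin.castSucc).mulVec (intify v) + b')) := by
  have hzz : z * z = z := by rcases hz with rfl | rfl <;> rfl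
  simp_rw [intify_last_eq_iff _ hz]
  rw [Fin.sum_filter_last_eq, Finset.smul_sum]
  refine Finset.sum_congr rfl fun w _ => ?_
  rw [intify_snoc w hz, snoc_dotProduct_mulVec_snoc Q hQ, red₂_mulVec_snoc_add A _ z b b' hb',
    add_mulVec, dotProduct_add, smul_mulVec, dotProduct_smul,
    dotProduct_diagonal_mulVec_of_mul_self _ _ (intify_mul_self w), hzz, smul_eq_mul,
    add_comm _ (z * _), zpow_add₀ Complex.I_ne_zero, mul_smul]

/-- Fixing the final bit of the summation index of a quadratic form expansion
to the value `z` yields a smaller quadratic form expansion, with Gram matrix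
`Q̃ + 2z·diag(q)`, expansion matrix the first `r` columns of `A`, offset vector
`b' ≡ b + z·a (mod 2)`, and global phase `i^{z·u}`. -/
theorem qfe_fix_final_bit
    (n r : ℕ) (Q : Matrix (Fin (r+1)) (Fin (r+1)) ℤ) (hQ : Q.IsSymm)
    (A : Matrix (Fin n) (Fin (r+1)) ℤ) (hA : ∀ j c, A j c = 0 ∨ A j c = 1)
    (b : Fin n → ℤ) (hb : ∀ j, b j = 0 ∨ b j = 1)
    (z : ℤ) (hz : z = 0 ∨ z = 1)
    (b' : Fin n → ℤ) (hb'01 : ∀ j, b' j = 0 ∨ b' j = 1)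
    (hb' : ∀ j, b' j ≡ b j + z * A j (Fin.last r) [ZMOD 2]) :
    (∑ v ∈ Finset.univ.filter (fun v : Fin (r+1) → ZMod 2 => intify v (Fin.last r) = z),
        (Complex.I ^ (intify v ⬝ᵥ Q.mulVec (intify v))) • ind (red₂ (A.mulVec (intify v) + b)))
      =
    (Complex.I ^ (z * Q (Fin.last r) (Fin.last r))) •
      ∑ v : Fin r → ZMod 2,
        (Complex.I ^ (intify v ⬝ᵥ
            ((Q.submatrix Fin.castSucc Fin.castSucc
              + (2 * z) • Matrix.diagonal (fun k => Q (Fin.castSucc k) (Fin.last r))).mulVec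
              (intify v)))) •
          ind (red₂ ((A.submatrix id Fin.castSucc).mulVec (intify v) + b')) :=
  qfe_fix_final_bit_general n r Q hQ A b z hz b' hb'
end

section
/- Let n, r be natural numbers, g : ℤ, Q a symmetric r×r integer matrix, A an n×r integer matrix with all entries in {0,1}, b : Fin n → ℤ with entries in {0,1}, and j : Fin n. Define the operator Z_j on functions f : (Fin n → ZMod 2) → ℂ by (Z_j f)(y) = (−1)^{(y j).val} · f(y). Let a_j : Fin r → ℤ be row j of A. Then Z_j ψ[g,Q,A,b] = ψ[g + 4·b_j, Q + 2 • diag(a_j), A, b]. -/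
open Matrix

/-- The eighth root of unity `τ = e^{iπ/4} = √i`. -/
noncomputable def τ : ℂ := Complex.exp (Real.pi * Complex.I / 4)

/-- The quadratic form expansion `ψ[g,Q,A,b]`:
`(τ^g / √(2^m)) • ∑_{bit vectors x} i^{xᵀ Q x} • e_{red₂(A x + b)}`. -/
noncomputable def qfe (n m : ℕ) (g : ℤ) (Q : Matrix (Fin m) (Fin m) ℤ)
    (A : Matrix (Fin n) (Fin m) ℤ) (b : Fin n → ℤ) : (Fin n → ZMod 2) → ℂ :=
  (τ ^ g / (Real.sqrt (2 ^ m) : ℂ)) •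
    ∑ v : Fin m → ZMod 2,
      (Complex.I ^ (intify v ⬝ᵥ Q.mulVec (intify v))) • ind (red₂ (A.mulVec (intify v) + b))

lemma neg_one_zpow_zmod (m : ℤ) : ((-1:ℂ)) ^ (((m : ZMod 2)).val) = (-1:ℂ) ^ m := by
  rcases Int.even_or_odd m with h | h
  · have h2 : ((m : ZMod 2)) = 0 := by
      obtain ⟨k, hk⟩ := h
      have : (2:ℤ) ∣ m := ⟨k, by omega⟩
      exact (ZMod.intCast_zmod_eq_zero_iff_dvd m 2).2 this
    rw [h2, h.neg_one_zpow]; simp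
  · have h2 : ((m : ZMod 2)) = 1 := by
      obtain ⟨k, hk⟩ := h
      subst hk; push_cast; rw [show ((2:ZMod 2)) = 0 from rfl]; ring
    rw [h2, h.neg_one_zpow]; simp [ZMod.val_one]

lemma tau_pow_four : τ ^ (4:ℕ) = -1 := by
  rw [τ, ← Complex.exp_nat_mul]
  rw [show ((4:ℕ):ℂ) * (Real.pi * Complex.I / 4) = Real.pi * Complex.I by ring]
  exact Complex.exp_pi_mul_I

/-- The Pauli `Z_j` gate transforms a quadratic form expansion by
`g ↦ g + 4 b_j` and `Q ↦ Q + 2 diag(a_j)`, where `a_j` is row `j` of `A`. -/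
theorem qfe_simulateZ
    (n r : ℕ) (g : ℤ) (Q : Matrix (Fin r) (Fin r) ℤ) (hQ : Q.IsSymm)
    (A : Matrix (Fin n) (Fin r) ℤ) (hA : ∀ l c, A l c = 0 ∨ A l c = 1)
    (b : Fin n → ℤ) (hb : ∀ l, b l = 0 ∨ b l = 1)
    (j : Fin n) :
    (fun y => ((-1 : ℂ)) ^ ((y j).val) * qfe n r g Q A b y)
      = qfe n r (g + 4 * b j) (Q + (2 : ℤ) • Matrix.diagonal (fun k => A j k)) A b := by
  funext y
  have hτ : τ ≠ 0 := Complex.exp_ne_zero _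
  have hτ4 : τ ^ (4 * b j) = (-1:ℂ) ^ (b j) := by
    rw [_root_.zpow_mul, show ((4:ℤ)) = ((4:ℕ):ℤ) by norm_num, zpow_natCast, tau_pow_four]
  simp only [qfe, Pi.smul_apply, smul_eq_mul, Finset.sum_apply]
  rw [zpow_add₀ hτ, hτ4]
  have hkey : ((-1:ℂ)) ^ ((y j).val) *
      (∑ v : Fin r → ZMod 2, Complex.I ^ (intify v ⬝ᵥ Q.mulVec (intify v)) *
        ind (red₂ (A.mulVec (intify v) + b)) y)
      = (-1:ℂ) ^ (b j) *
      ∑ v : Fin r → ZMod 2,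
        Complex.I ^ (intify v ⬝ᵥ ((Q + (2:ℤ) • Matrix.diagonal (fun k => A j k)).mulVec (intify v))) *
        ind (red₂ (A.mulVec (intify v) + b)) y := by
    rw [Finset.mul_sum, Finset.mul_sum]
    refine Finset.sum_congr rfl fun v _ => ?_
    by_cases h : y = red₂ (A.mulVec (intify v) + b)
    · have hy : (y j).val = (((A.mulVec (intify v) j + b j : ℤ) : ZMod 2)).val := by
        rw [h]; rfl
      rw [ind, if_pos h]
      have hsq : (intify v) ⬝ᵥ ((Q + (2:ℤ) • Matrix.diagonal (fun k => A j k)).mulVec (intify v))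
          = (intify v) ⬝ᵥ (Q.mulVec (intify v)) + 2 * (A.mulVec (intify v) j) := by
        rw [add_mulVec, dotProduct_add]
        congr 1
        have h2 : intify v ⬝ᵥ (((2:ℤ) • Matrix.diagonal (fun k => A j k)).mulVec (intify v))
            = 2 * ∑ k, A j k * intify v k * intify v k := by
          simp only [dotProduct, smul_mulVec, Pi.smul_apply, mulVec_diagonal, smul_eq_mul,
            Finset.mul_sum]
          exact Finset.sum_congr rfl fun k _ => by ring
        rw [h2]
        congr 1
        simp only [mulVec, dotProduct]
        refine Finset.sum_congr rfl fun k _ => ?_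
        have hx : intify v k * intify v k = intify v k := by
          have := ZMod.val_lt (v k)
          interval_cases hvk : (v k).val <;> simp [intify, hvk]
        rw [mul_assoc, hx]
      rw [hsq, zpow_add₀ Complex.I_ne_zero, hy, neg_one_zpow_zmod,
          zpow_add₀ (by norm_num : (-1:ℂ) ≠ 0)]
      rw [show Complex.I ^ (2 * (A.mulVec (intify v) j)) = (-1:ℂ) ^ (A.mulVec (intify v) j) by
        rw [_root_.zpow_mul, show Complex.I ^ (2:ℤ) = -1 by rw [show (2:ℤ)=((2:ℕ):ℤ) from rfl, zpow_natCast, Complex.I_sq]]]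
      ring
    · rw [ind, if_neg h]; ring
  linear_combination (τ ^ g / (Real.sqrt (2 ^ r) : ℂ)) * hkey
end

section
/- Let n, r be natural numbers, g : ℤ, Q a symmetric r×r integer matrix, A an n×r integer matrix with all entries in {0,1}, b : Fin n → ℤ with entries in {0,1}, and j, k : Fin n with j ≠ k. Define the operator CZ_{j,k} on functions f : (Fin n → ZMod 2) → ℂ by (CZ_{j,k} f)(y) = (−1)^{(y j).val · (y k).val} · f(y). Let a_j, a_k : Fin r → ℤ be rows j and k of A. Then CZ_{j,k} ψ[g,Q,A,b] = ψ[g + 4·b_j·b_k, Q + a_j * a_kᵀ + a_k * a_jᵀ + 2 • diag(b_k • a_j + b_j • a_k), A, b], where a * cᵀ denotes the r×r outer-product matrix with (h,l) entry (a h)·(c l). -/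
open Matrix

lemma neg_one_zpow_congr {m m' : ℤ} (h : m % 2 = m' % 2) :
    ((-1 : ℂ)) ^ m = (-1 : ℂ) ^ m' := by
  rcases Int.even_or_odd m with he | ho
  · rw [he.neg_one_zpow, (Int.even_iff.mpr (h ▸ Int.even_iff.mp he)).neg_one_zpow]
  · rw [ho.neg_one_zpow, (Int.odd_iff.mpr (h ▸ Int.odd_iff.mp ho)).neg_one_zpow]

lemma dot_vecMulVec {r : ℕ} (x a c : Fin r → ℤ) :
    x ⬝ᵥ (vecMulVec a c).mulVec x = (a ⬝ᵥ x) * (c ⬝ᵥ x) := by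
  simp only [Matrix.mulVec, Matrix.vecMulVec_apply, dotProduct, Finset.mul_sum, Finset.sum_mul]
  rw [Finset.sum_comm]
  exact Finset.sum_congr rfl fun i _ => Finset.sum_congr rfl fun l _ => by ring

lemma dot_diag {r : ℕ} (x d : Fin r → ℤ) (hx : ∀ i, x i = 0 ∨ x i = 1) :
    x ⬝ᵥ (diagonal d).mulVec x = d ⬝ᵥ x := by
  simp only [dotProduct, Matrix.mulVec_diagonal]
  refine Finset.sum_congr rfl fun i _ => ?_
  rcases hx i with h | h <;> rw [h] <;> ring

lemma key_scalar {r : ℕ} (Q : Matrix (Fin r) (Fin r) ℤ) (aj ak : Fin r → ℤ) (bj bk : ℤ)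
    (x : Fin r → ℤ) (hx : ∀ i, x i = 0 ∨ x i = 1) :
    (-1 : ℂ) ^ ((aj ⬝ᵥ x + bj) * (ak ⬝ᵥ x + bk)) * Complex.I ^ (x ⬝ᵥ Q.mulVec x)
      = (-1 : ℂ) ^ (bj * bk) *
        Complex.I ^ (x ⬝ᵥ (Q + vecMulVec aj ak + vecMulVec ak aj
            + (2 : ℤ) • diagonal (bk • aj + bj • ak)).mulVec x) := by
  have hquad : x ⬝ᵥ (Q + vecMulVec aj ak + vecMulVec ak aj
      + (2 : ℤ) • diagonal (bk • aj + bj • ak)).mulVec x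
      = x ⬝ᵥ Q.mulVec x
        + 2 * ((aj ⬝ᵥ x) * (ak ⬝ᵥ x) + bk * (aj ⬝ᵥ x) + bj * (ak ⬝ᵥ x)) := by
    rw [Matrix.add_mulVec, Matrix.add_mulVec, Matrix.add_mulVec, dotProduct_add,
      dotProduct_add, dotProduct_add, Matrix.smul_mulVec, dotProduct_smul,
      dot_vecMulVec, dot_vecMulVec, dot_diag _ _ hx, add_dotProduct, smul_dotProduct,
      smul_dotProduct]
    simp only [smul_eq_mul]
    ring
  rw [hquad, zpow_add₀ Complex.I_ne_zero,
    _root_.zpow_mul Complex.I 2 ((aj ⬝ᵥ x) * (ak ⬝ᵥ x) + bk * (aj ⬝ᵥ x) + bj * (ak ⬝ᵥ x)),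
    show Complex.I ^ (2 : ℤ) = -1 by rw [show (2 : ℤ) = ((2 : ℕ) : ℤ) by norm_num, zpow_natCast, Complex.I_sq],
    show (aj ⬝ᵥ x + bj) * (ak ⬝ᵥ x + bk)
      = bj * bk + ((aj ⬝ᵥ x) * (ak ⬝ᵥ x) + bk * (aj ⬝ᵥ x) + bj * (ak ⬝ᵥ x)) by ring,
    zpow_add₀ (by norm_num : (-1 : ℂ) ≠ 0)]
  ring

/-- The controlled-`Z` gate `CZ_{j,k}` transforms a quadratic form expansion by
`g ↦ g + 4 b_j b_k` and `Q ↦ Q + a_j a_kᵀ + a_k a_jᵀ + 2 diag(b_k a_j + b_j a_k)`. -/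
theorem qfe_simulateCZ
    (n r : ℕ) (g : ℤ) (Q : Matrix (Fin r) (Fin r) ℤ) (hQ : Q.IsSymm)
    (A : Matrix (Fin n) (Fin r) ℤ) (hA : ∀ l c, A l c = 0 ∨ A l c = 1)
    (b : Fin n → ℤ) (hb : ∀ l, b l = 0 ∨ b l = 1)
    (j k : Fin n) (hjk : j ≠ k) :
    (fun y => ((-1 : ℂ)) ^ ((y j).val * (y k).val) * qfe n r g Q A b y)
      = qfe n r (g + 4 * b j * b k)
          (Q + Matrix.vecMulVec (fun c => A j c) (fun c => A k c)
             + Matrix.vecMulVec (fun c => A k c) (fun c => A j c)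
             + (2 : ℤ) • Matrix.diagonal (b k • (fun c => A j c) + b j • (fun c => A k c))) A b := by
  have hτ : τ ≠ 0 := Complex.exp_ne_zero _
  have hτ4 : τ ^ (4 : ℕ) = -1 := by
    rw [τ, ← Complex.exp_nat_mul,
      show ((4 : ℕ) : ℂ) * (Real.pi * Complex.I / 4) = Real.pi * Complex.I by push_cast; ring,
      Complex.exp_pi_mul_I]
  have hconst : τ ^ (g + 4 * b j * b k) = τ ^ g * (-1 : ℂ) ^ (b j * b k) := by
    rw [show g + 4 * b j * b k = g + 4 * (b j * b k) by ring, zpow_add₀ hτ,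
      _root_.zpow_mul τ 4 (b j * b k),
      show τ ^ (4 : ℤ) = -1 by rw [show (4 : ℤ) = ((4 : ℕ) : ℤ) by norm_num, zpow_natCast, hτ4]]
  set Q' := Q + Matrix.vecMulVec (fun c => A j c) (fun c => A k c)
             + Matrix.vecMulVec (fun c => A k c) (fun c => A j c)
             + (2 : ℤ) • Matrix.diagonal (b k • (fun c => A j c) + b j • (fun c => A k c)) with hQ'
  funext y
  simp only [qfe, Pi.smul_apply, Finset.sum_apply, smul_eq_mul, hconst]
  have hsum : ∑ v : Fin r → ZMod 2, (-1 : ℂ) ^ ((y j).val * (y k).val) *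
        (Complex.I ^ (intify v ⬝ᵥ Q.mulVec (intify v)) * ind (red₂ (A.mulVec (intify v) + b)) y)
      = ∑ v : Fin r → ZMod 2, (-1 : ℂ) ^ (b j * b k) *
        (Complex.I ^ (intify v ⬝ᵥ Q'.mulVec (intify v)) *
          ind (red₂ (A.mulVec (intify v) + b)) y) := by
    refine Finset.sum_congr rfl fun v _ => ?_
    by_cases h : y = red₂ (A.mulVec (intify v) + b)
    · have hx : ∀ i, intify v i = 0 ∨ intify v i = 1 := by
        intro i
        have := ZMod.val_lt (v i)
        interval_cases h : (v i).val <;> simp [intify, h]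
      subst h
      simp only [ind, eq_self_iff_true, if_true, mul_one]
      have hval : ∀ l : Fin n,
          ((red₂ (A.mulVec (intify v) + b) l).val : ℤ) = (A.mulVec (intify v) + b) l % 2 := by
        intro l; rw [red₂]; exact ZMod.val_intCast _
      have hP : (-1 : ℂ) ^ ((red₂ (A.mulVec (intify v) + b) j).val
            * (red₂ (A.mulVec (intify v) + b) k).val)
          = (-1 : ℂ) ^ (((A.mulVec (intify v) + b) j) * ((A.mulVec (intify v) + b) k)) := by
        rw [← zpow_natCast (-1 : ℂ)]
        push_cast
        rw [hval j, hval k]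
        exact neg_one_zpow_congr (Int.mul_emod _ _ 2).symm
      rw [hP]
      exact key_scalar Q (fun c => A j c) (fun c => A k c) (b j) (b k) (intify v) hx
    · simp [ind, h]
  calc (-1 : ℂ) ^ ((y j).val * (y k).val) * (τ ^ g / (Real.sqrt (2 ^ r) : ℂ) *
        ∑ v : Fin r → ZMod 2, Complex.I ^ (intify v ⬝ᵥ Q.mulVec (intify v)) *
          ind (red₂ (A.mulVec (intify v) + b)) y)
      = τ ^ g / (Real.sqrt (2 ^ r) : ℂ) *
        ∑ v : Fin r → ZMod 2, (-1 : ℂ) ^ ((y j).val * (y k).val) *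
          (Complex.I ^ (intify v ⬝ᵥ Q.mulVec (intify v)) *
            ind (red₂ (A.mulVec (intify v) + b)) y) := by
        rw [← Finset.mul_sum]; ring
    _ = τ ^ g / (Real.sqrt (2 ^ r) : ℂ) *
        ∑ v : Fin r → ZMod 2, (-1 : ℂ) ^ (b j * b k) *
          (Complex.I ^ (intify v ⬝ᵥ Q'.mulVec (intify v)) *
            ind (red₂ (A.mulVec (intify v) + b)) y) := by rw [hsum]
    _ = τ ^ g * (-1 : ℂ) ^ (b j * b k) / (Real.sqrt (2 ^ r) : ℂ) *
        ∑ v : Fin r → ZMod 2,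
          Complex.I ^ (intify v ⬝ᵥ Q'.mulVec (intify v)) *
            ind (red₂ (A.mulVec (intify v) + b)) y := by
        rw [← Finset.mul_sum]; ring
end

section
/- Let n, r be natural numbers, g : ℤ, Q a symmetric r×r integer matrix, A an n×r integer matrix with all entries in {0,1}, b : Fin n → ℤ with entries in {0,1}, and h, j : Fin n with h ≠ j. Define the controlled-NOT operator CX_{h,j} on functions f : (Fin n → ZMod 2) → ℂ by (CX_{h,j} f)(y) = f(Function.update y j (y j + y h)). Let A' be the n×r integer matrix with entries in {0,1} whose row j is congruent modulo 2 to (row j of A) + (row h of A) and whose other rows equal those of A, and let b' : Fin n → ℤ be the {0,1}-vector with b'_j ≡ b_j + b_h (mod 2) and b'_l = b_l for l ≠ j. Then CX_{h,j} ψ[g,Q,A,b] = ψ[g,Q,A',b']. -/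
open Matrix

private lemma cx_update_invol {n : ℕ} (h j : Fin n) (hhj : h ≠ j) (z : Fin n → ZMod 2) :
    Function.update (Function.update z j (z j + z h)) j
      ((Function.update z j (z j + z h)) j + (Function.update z j (z j + z h)) h) = z := by
  rw [Function.update_self, Function.update_of_ne hhj, Function.update_idem]
  have : z j + z h + z h = z j := by
    rw [add_assoc, CharTwo.add_self_eq_zero, add_zero]
  rw [this, Function.update_eq_self]

private lemma cx_red_key {n r : ℕ}
    (A : Matrix (Fin n) (Fin r) ℤ) (b : Fin n → ℤ)
    (h j : Fin n)
    (A' : Matrix (Fin n) (Fin r) ℤ)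
    (hA'row : ∀ c, A' j c ≡ A j c + A h c [ZMOD 2])
    (hA'other : ∀ l, l ≠ j → ∀ c, A' l c = A l c)
    (b' : Fin n → ℤ)
    (hb'j : b' j ≡ b j + b h [ZMOD 2])
    (hb'other : ∀ l, l ≠ j → b' l = b l)
    (x : Fin r → ℤ) :
    Function.update (red₂ (A.mulVec x + b)) j
        ((red₂ (A.mulVec x + b)) j + (red₂ (A.mulVec x + b)) h)
      = red₂ (A'.mulVec x + b') := by
  funext l
  rcases eq_or_ne l j with rfl | hl
  · simp only [red₂, Function.update_self, Matrix.mulVec, dotProduct, Pi.add_apply]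
    have hb2 : ((b' l : ZMod 2)) = ((b l : ZMod 2)) + ((b h : ZMod 2)) := by
      have := (ZMod.intCast_eq_intCast_iff _ _ _).mpr hb'j
      push_cast at this; exact this
    have hrow : ∀ c, ((A' l c : ZMod 2)) = (A l c : ZMod 2) + (A h c : ZMod 2) := by
      intro c
      have := (ZMod.intCast_eq_intCast_iff _ _ _).mpr (hA'row c)
      push_cast at this; exact this
    push_cast
    simp only [hrow, hb2, add_mul, Finset.sum_add_distrib]
    ring
  · simp only [red₂, Function.update_of_ne hl, Matrix.mulVec, dotProduct, Pi.add_apply,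
      hb'other l hl]
    congr 2
    exact Finset.sum_congr rfl fun c _ => by rw [hA'other l hl]

/-- The controlled-NOT gate `CX_{h,j}` transforms a quadratic form expansion
by adding row `h` of `A` into row `j` (mod 2), and `b_h` into `b_j` (mod 2). -/
theorem qfe_simulateCX
    (n r : ℕ) (g : ℤ) (Q : Matrix (Fin r) (Fin r) ℤ) (hQ : Q.IsSymm)
    (A : Matrix (Fin n) (Fin r) ℤ) (hA : ∀ l c, A l c = 0 ∨ A l c = 1)
    (b : Fin n → ℤ) (hb : ∀ l, b l = 0 ∨ b l = 1)
    (h j : Fin n) (hhj : h ≠ j)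
    (A' : Matrix (Fin n) (Fin r) ℤ) (hA'01 : ∀ l c, A' l c = 0 ∨ A' l c = 1)
    (hA'row : ∀ c, A' j c ≡ A j c + A h c [ZMOD 2])
    (hA'other : ∀ l, l ≠ j → ∀ c, A' l c = A l c)
    (b' : Fin n → ℤ) (hb'01 : ∀ l, b' l = 0 ∨ b' l = 1)
    (hb'j : b' j ≡ b j + b h [ZMOD 2])
    (hb'other : ∀ l, l ≠ j → b' l = b l) :
    (fun y => qfe n r g Q A b (Function.update y j (y j + y h)))
      = qfe n r g Q A' b' := by
  funext y
  simp only [qfe, Pi.smul_apply, Finset.sum_apply, smul_eq_mul]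
  congr 1
  refine Finset.sum_congr rfl fun v _ => ?_
  congr 1
  have key := cx_red_key A b h j A' hA'row hA'other b' hb'j hb'other (intify v)
  rw [← key]
  simp only [ind]
  by_cases hc : Function.update y j (y j + y h) = red₂ (A.mulVec (intify v) + b)
  · rw [if_pos hc, if_pos]
    rw [← hc, cx_update_invol h j hhj]
  · rw [if_neg hc, if_neg]
    intro he
    apply hc
    rw [he, cx_update_invol h j hhj]
end

section
/- Let n, r be natural numbers, A : Matrix (Fin n) (Fin r) (ZMod 2) a matrix whose associated linear map x ↦ A.mulVec x is injective, b : Fin n → ZMod 2, and Q a symmetric r×r integer matrix. Define ψ : (Fin n → ZMod 2) → ℂ by ψ := (1 / Real.sqrt (2^r)) • ∑ over bit vectors x : Fin r → ℤ of i^{x ⬝ᵥ (Q.mulVec x)} • e_{A.mulVec (red₂ x) + b}. Let S be a finite set of indices in Fin n, β : Fin n → ZMod 2, let A_S be the submatrix of A consisting of the rows indexed by S, and let r' be the rank of A_S over ZMod 2. Then ∑ over y : Fin n → ZMod 2 with y j = β j for all j ∈ S of ‖ψ y‖² equals 2^{−r'} if there exists x : Fin r → ZMod 2 with (A.mulVec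 x + b) j = β j for all j ∈ S, and equals 0 otherwise. (This is the probability that simultaneous Z-basis measurements of the qubits in S yield outcome β.) -/
open Matrix

/-- For a normalised quadratic form expansion with injective expansion
matrix `A` over `ZMod 2`, the probability that simultaneous `Z`-basis measurements of the
qubits in `S` yield outcome `β` is `2^{-r'}` if `β` is attainable on `S` (where `r'` is the
rank over `ZMod 2` of the submatrix of rows of `A` indexed by `S`), and `0` otherwise. -/
theorem qfe_partial_measurement_probability
    (n r : ℕ) (A : Matrix (Fin n) (Fin r) (ZMod 2))
    (hA : Function.Injective A.mulVec)
    (b : Fin n → ZMod 2)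
    (Q : Matrix (Fin r) (Fin r) ℤ) (hQ : Q.IsSymm)
    (S : Finset (Fin n)) (β : Fin n → ZMod 2) :
    (∑ y ∈ Finset.univ.filter (fun y : Fin n → ZMod 2 => ∀ j ∈ S, y j = β j),
        ‖((((1 / Real.sqrt (2 ^ r) : ℝ)) : ℂ) •
            ∑ v : Fin r → ZMod 2,
              (Complex.I ^ (intify v ⬝ᵥ Q.mulVec (intify v))) •
                ind (A.mulVec (red₂ (intify v)) + b)) y‖ ^ 2)
      = if ∃ x : Fin r → ZMod 2, ∀ j ∈ S, (A.mulVec x + b) j = β j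
        then (2 : ℝ) ^ (-(((A.submatrix (fun s : {j // j ∈ S} => (s : Fin n)) id).rank : ℤ)))
        else 0 := by
  classical
  set f : (Fin r → ZMod 2) → (Fin n → ZMod 2) := fun v => A.mulVec v + b with hf_def
  have hf : Function.Injective f := by
    intro a a' h
    apply hA
    have := congrArg (fun y => y - b) h
    simpa [hf_def] using this
  -- pointwise evaluation of the norm squared
  have hpt : ∀ y : Fin n → ZMod 2,
      ‖((((1 / Real.sqrt (2 ^ r) : ℝ)) : ℂ) •
            ∑ v : Fin r → ZMod 2,
              (Complex.I ^ (intify v ⬝ᵥ Q.mulVec (intify v))) •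
                ind (A.mulVec (red₂ (intify v)) + b)) y‖ ^ 2
        = if ∃ v, f v = y then ((2 : ℝ) ^ r)⁻¹ else 0 := by
    intro y
    have hval : ((((1 / Real.sqrt (2 ^ r) : ℝ)) : ℂ) •
            ∑ v : Fin r → ZMod 2,
              (Complex.I ^ (intify v ⬝ᵥ Q.mulVec (intify v))) •
                ind (A.mulVec (red₂ (intify v)) + b)) y
        = (((1 / Real.sqrt (2 ^ r) : ℝ)) : ℂ) *
            ∑ v : Fin r → ZMod 2,
              (Complex.I ^ (intify v ⬝ᵥ Q.mulVec (intify v))) *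
                (if y = f v then 1 else 0) := by
      simp [ind, red₂_intify, hf_def, Finset.sum_apply]
    rw [hval]
    have hsqrt : Real.sqrt (2 ^ r) ^ 2 = 2 ^ r :=
      Real.sq_sqrt (by positivity)
    by_cases hex : ∃ v, f v = y
    · obtain ⟨v₀, hv₀⟩ := hex
      have hsum : (∑ v : Fin r → ZMod 2,
              (Complex.I ^ (intify v ⬝ᵥ Q.mulVec (intify v))) *
                (if y = f v then 1 else 0))
          = Complex.I ^ (intify v₀ ⬝ᵥ Q.mulVec (intify v₀)) := by
        rw [Finset.sum_eq_single v₀]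
        · simp [hv₀.symm]
        · intro v _ hv
          have : y ≠ f v := by
            rw [← hv₀]
            exact fun h => hv (hf h.symm)
          simp [this]
        · simp
      rw [hsum, if_pos ⟨v₀, hv₀⟩]
      rw [norm_mul, mul_pow, norm_zpow, Complex.norm_I, _root_.one_zpow]
      rw [Complex.norm_real]
      simp only [norm_div, norm_one, Real.norm_eq_abs,
        abs_of_nonneg (Real.sqrt_nonneg _), one_pow, div_pow, hsqrt]
      simp
    · have hsum : (∑ v : Fin r → ZMod 2,
              (Complex.I ^ (intify v ⬝ᵥ Q.mulVec (intify v))) *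
                (if y = f v then 1 else 0)) = 0 := by
        apply Finset.sum_eq_zero
        intro v _
        have : y ≠ f v := fun h => hex ⟨v, h.symm⟩
        simp [this]
      rw [hsum, if_neg hex]
      simp
  rw [Finset.sum_congr rfl (fun y _ => hpt y)]
  -- the sum is the cardinality of attainable outcomes times (2^r)⁻¹
  rw [← Finset.sum_filter]
  rw [Finset.sum_const]
  -- set up the solution set over v
  set T : Finset (Fin r → ZMod 2) :=
    Finset.univ.filter (fun v => ∀ j ∈ S, f v j = β j) with hT_def
  have hcard : ((Finset.univ.filter (fun y : Fin n → ZMod 2 => ∀ j ∈ S, y j = β j)).filter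
        (fun y => ∃ v, f v = y)).card = T.card := by
    symm
    apply Finset.card_bij (fun v _ => f v)
    · intro v hv
      simp only [hT_def, Finset.mem_filter, Finset.mem_univ, true_and] at hv ⊢
      exact ⟨hv, v, rfl⟩
    · intro v₁ _ v₂ _ h
      exact hf h
    · intro y hy
      simp only [Finset.mem_filter, Finset.mem_univ, true_and] at hy
      obtain ⟨hy1, v, hv⟩ := hy
      refine ⟨v, ?_, hv⟩
      simp only [hT_def, Finset.mem_filter, Finset.mem_univ, true_and]
      intro j hj
      rw [hv]; exact hy1 j hj
  rw [hcard]
  set M := A.submatrix (fun s : {j // j ∈ S} => (s : Fin n)) id with hM_def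
  set L := M.mulVecLin with hL_def
  have hMA : ∀ (v : Fin r → ZMod 2) (s : {j // j ∈ S}), L v s = A.mulVec v s := by
    intro v s; rfl
  by_cases hex : ∃ x : Fin r → ZMod 2, ∀ j ∈ S, (A.mulVec x + b) j = β j
  · rw [if_pos hex]
    obtain ⟨x₀, hx₀⟩ := hex
    -- T is the coset x₀ + ker L
    have hmem : ∀ v : Fin r → ZMod 2, (∀ j ∈ S, f v j = β j) ↔ L v = L x₀ := by
      intro v
      constructor
      · intro h
        funext s
        rw [hMA, hMA]
        have h1 := h s s.2
        have h2 := hx₀ s s.2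
        simp only [hf_def, Pi.add_apply] at h1 h2
        have := h1.trans h2.symm
        exact add_right_cancel this
      · intro h j hj
        have := congrFun h (⟨j, hj⟩ : {j // j ∈ S})
        rw [hMA, hMA] at this
        simp only [hf_def, Pi.add_apply]
        rw [this]
        exact hx₀ j hj
    have hTcard : T.card = Fintype.card (LinearMap.ker L) := by
      rw [hT_def, ← Fintype.card_subtype]
      apply Fintype.card_congr
      refine ⟨fun v => ⟨v.1 - x₀, ?_⟩, fun w => ⟨w.1 + x₀, ?_⟩, ?_, ?_⟩
      · rw [LinearMap.mem_ker, map_sub, (hmem v.1).mp v.2, sub_self]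
      · rw [hmem, map_add, w.2, zero_add]
      · intro v; ext; simp
      · intro w; ext; simp
    have hker : Module.finrank (ZMod 2) (LinearMap.ker L) = r - M.rank := by
      have h1 := LinearMap.finrank_range_add_finrank_ker L
      have h2 : Module.finrank (ZMod 2) (Fin r → ZMod 2) = r := by
        simp
      have h3 : M.rank = Module.finrank (ZMod 2) (LinearMap.range L) := rfl
      rw [h2] at h1
      rw [h3]
      exact Nat.eq_sub_of_add_eq' h1
    have hrle : M.rank ≤ r := by
      have h1 := LinearMap.finrank_range_add_finrank_ker L
      have h2 : Module.finrank (ZMod 2) (Fin r → ZMod 2) = r := by simp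
      have h3 : M.rank = Module.finrank (ZMod 2) (LinearMap.range L) := rfl
      rw [h2] at h1
      rw [h3]
      exact Nat.le.intro h1
    have hcardker : Fintype.card (LinearMap.ker L) = 2 ^ (r - M.rank) := by
      rw [Module.card_eq_pow_finrank (K := ZMod 2) (V := LinearMap.ker L), ZMod.card, hker]
    rw [hTcard, hcardker]
    rw [nsmul_eq_mul]
    push_cast
    rw [_root_.zpow_neg, zpow_natCast]
    have h2r : (2 : ℝ) ^ r = 2 ^ (r - M.rank) * 2 ^ M.rank := by
      rw [← pow_add, Nat.sub_add_cancel hrle]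
    rw [h2r, mul_inv, ← mul_assoc, mul_inv_cancel₀ (by positivity), one_mul]
  · rw [if_neg hex]
    have : T = ∅ := by
      rw [hT_def, Finset.filter_eq_empty_iff]
      intro v _
      intro h
      exact hex ⟨v, h⟩
    rw [this]
    simp
end
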